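/- Suppose for each k in a finite index set K there are constants y_k > 0 and z_k, and the PSO utility on an interval is U_P(p) = α_L·Σ_{j∈L}(-(a_j·S_j(p) - b_j)² + c_j) - 2p·Σ_{k∈φ₁}(y_k p - z_k) - 2p·Σ_{k∈φ₂}C_k + Σ_{k∈K} p·ē, where S_j(p) = Σ_{k∈Λ_j∩φ₁}(y_k p - z_k) + Σ_{k∈Λ_j∩φ₂}C_k. If α_L > 0 and each a_j > 0, then the second derivative of U_P satisfies U_P''(p) = -2α_L·Σ_j a_j²·(Σ_{k∈Λ_j∩φ₁} y_k)² - 4·Σ_{k∈φ₁} y_k ≤ 0, hence U_P is concave in p. -/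

import Mathlib

/-!
Once φ₁ and φ₂ are fixed, every MES response is affine in p, so the load `S_j(p)` of each LCS is
affine with slope `Σ_{k∈Λ_j∩φ₁} y_k` and the PSO utility is a quadratic polynomial in p. Its
leading coefficient `-α_L Σ_j a_j² (Σ_{k∈Λ_j∩φ₁} y_k)² - 2 Σ_{k∈φ₁} y_k` is nonpositive, and a
quadratic with nonpositive leading coefficient has constant nonpositive second derivative.
-/

open Finset

section Quadratic

variable {f : ℝ → ℝ} {A B C : ℝ}

lemma deriv_eq_of_quadratic (hf : ∀ p, f p = A * p ^ 2 + B * p + C) :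
    deriv f = fun p => 2 * A * p + B := by
  obtain rfl : f = fun p => A * p ^ 2 + B * p + C := funext hf
  ext p
  refine (((((hasDerivAt_pow 2 p).const_mul A).fun_add
    ((hasDerivAt_id' p).const_mul B)).add_const C).congr_deriv ?_).deriv
  norm_num
  ring

lemma deriv_deriv_eq_of_quadratic (hf : ∀ p, f p = A * p ^ 2 + B * p + C) (p : ℝ) :
    deriv (deriv f) p = 2 * A := by
  rw [deriv_eq_of_quadratic hf]
  simp

lemma concaveOn_univ_of_quadratic (hf : ∀ p, f p = A * p ^ 2 + B * p + C) (hA : A ≤ 0) :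
    ConcaveOn ℝ Set.univ f := by
  obtain rfl : f = fun p => A * p ^ 2 + B * p + C := funext hf
  refine concaveOn_univ_of_deriv2_nonpos (by fun_prop) ?_ fun p => ?_
  · rw [deriv_eq_of_quadratic fun _ => rfl]
    fun_prop
  · rw [Function.iterate_succ_apply, Function.iterate_one,
      deriv_deriv_eq_of_quadratic fun _ => rfl]
    linarith

end Quadratic

lemma sum_quadratic {ι R : Type*} [CommSemiring R] (s : Finset ι) (A B C : ι → R) (p : R) :
    ∑ i ∈ s, (A i * p ^ 2 + B i * p + C i) =
      (∑ i ∈ s, A i) * p ^ 2 + (∑ i ∈ s, B i) * p + ∑ i ∈ s, C i := by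
  simp only [sum_add_distrib, sum_mul]

lemma sum_affine {ι R : Type*} [CommRing R] (s : Finset ι) (y z : ι → R) (p : R) :
    ∑ k ∈ s, (y k * p - z k) = (∑ k ∈ s, y k) * p - ∑ k ∈ s, z k := by
  rw [sum_sub_distrib, sum_mul]

lemma psoUtility_eq_quadratic (K L φ₁ φ₂ : Finset ℕ) (Λ : ℕ → Finset ℕ)
    (a b c y z Cc : ℕ → ℝ) (αL eb : ℝ) (p : ℝ) :
    let Y j := ∑ k ∈ Λ j ∩ φ₁, y k
    let D j := ∑ k ∈ Λ j ∩ φ₂, Cc k - ∑ k ∈ Λ j ∩ φ₁, z k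
    αL * ∑ j ∈ L, (-(a j * ((∑ k ∈ Λ j ∩ φ₁, (y k * p - z k)) +
          ∑ k ∈ Λ j ∩ φ₂, Cc k) - b j) ^ 2 + c j)
      - 2 * p * (∑ k ∈ φ₁, (y k * p - z k)) - 2 * p * (∑ k ∈ φ₂, Cc k)
      + ∑ _k ∈ K, p * eb =
    (-αL * ∑ j ∈ L, a j ^ 2 * Y j ^ 2 - 2 * ∑ k ∈ φ₁, y k) * p ^ 2
      + (αL * ∑ j ∈ L, -2 * a j * Y j * (a j * D j - b j)
          + 2 * ∑ k ∈ φ₁, z k - 2 * ∑ k ∈ φ₂, Cc k + K.card * eb) * p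
      + αL * ∑ j ∈ L, (-(a j * D j - b j) ^ 2 + c j) := by
  intro Y D
  have hload : ∀ j ∈ L,
      -(a j * ((∑ k ∈ Λ j ∩ φ₁, (y k * p - z k)) + ∑ k ∈ Λ j ∩ φ₂, Cc k) - b j) ^ 2 + c j =
        -(a j ^ 2 * Y j ^ 2) * p ^ 2 + (-2 * a j * Y j * (a j * D j - b j)) * p
          + (-(a j * D j - b j) ^ 2 + c j) := by
    intro j _
    rw [sum_affine]
    ring
  rw [sum_congr rfl hload, sum_quadratic, sum_neg_distrib, sum_affine, sum_const, nsmul_eq_mul]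
  ring

theorem stmt_9_general (K L φ₁ φ₂ : Finset ℕ) (Λ : ℕ → Finset ℕ)
    (a b c y z Cc : ℕ → ℝ) (αL eb : ℝ)
    (hy : ∀ k ∈ φ₁, 0 < y k) (hαL : 0 < αL)
    (UP : ℝ → ℝ)
    (hUP : ∀ p : ℝ, UP p =
      αL * ∑ j ∈ L, (-(a j * ((∑ k ∈ Λ j ∩ φ₁, (y k * p - z k)) +
          ∑ k ∈ Λ j ∩ φ₂, Cc k) - b j) ^ 2 + c j)
      - 2 * p * (∑ k ∈ φ₁, (y k * p - z k)) - 2 * p * (∑ k ∈ φ₂, Cc k)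
      + ∑ _k ∈ K, p * eb) :
    (∀ p : ℝ, deriv (deriv UP) p =
      -2 * αL * ∑ j ∈ L, (a j) ^ 2 * (∑ k ∈ Λ j ∩ φ₁, y k) ^ 2 - 4 * ∑ k ∈ φ₁, y k) ∧
    (-2 * αL * ∑ j ∈ L, (a j) ^ 2 * (∑ k ∈ Λ j ∩ φ₁, y k) ^ 2 - 4 * ∑ k ∈ φ₁, y k ≤ 0) ∧
    ConcaveOn ℝ Set.univ UP := by
  have hquad := fun p => (hUP p).trans (psoUtility_eq_quadratic K L φ₁ φ₂ Λ a b c y z Cc αL eb p)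
  have hslope : 0 ≤ ∑ k ∈ φ₁, y k := sum_nonneg fun k hk => (hy k hk).le
  have hload : 0 ≤ αL * ∑ j ∈ L, a j ^ 2 * (∑ k ∈ Λ j ∩ φ₁, y k) ^ 2 :=
    mul_nonneg hαL.le (sum_nonneg fun j _ => by positivity)
  refine ⟨fun p => ?_, by linarith, concaveOn_univ_of_quadratic hquad (by linarith)⟩
  rw [deriv_deriv_eq_of_quadratic hquad]
  ring

/-- Lemma 2: on a price sub-interval where the sets φ₁ (interior-response MESs) and φ₂
(saturated MESs) are fixed, the PSO utility is concave in p, with second derivative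
-2α_L·Σ_j a_j²·(Σ_{k∈Λ_j∩φ₁} y_k)² - 4·Σ_{k∈φ₁} y_k ≤ 0. -/
theorem stmt_9 (K L φ₁ φ₂ : Finset ℕ) (Λ : ℕ → Finset ℕ)
    (a b c y z Cc : ℕ → ℝ) (αL eb : ℝ)
    (hy : ∀ k ∈ φ₁, 0 < y k) (hαL : 0 < αL) (ha : ∀ j ∈ L, 0 < a j)
    (UP : ℝ → ℝ)
    (hUP : ∀ p : ℝ, UP p =
      αL * ∑ j ∈ L, (-(a j * ((∑ k ∈ Λ j ∩ φ₁, (y k * p - z k)) +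
          ∑ k ∈ Λ j ∩ φ₂, Cc k) - b j) ^ 2 + c j)
      - 2 * p * (∑ k ∈ φ₁, (y k * p - z k)) - 2 * p * (∑ k ∈ φ₂, Cc k)
      + ∑ _k ∈ K, p * eb) :
    (∀ p : ℝ, deriv (deriv UP) p =
      -2 * αL * ∑ j ∈ L, (a j) ^ 2 * (∑ k ∈ Λ j ∩ φ₁, y k) ^ 2 - 4 * ∑ k ∈ φ₁, y k) ∧
    (-2 * αL * ∑ j ∈ L, (a j) ^ 2 * (∑ k ∈ Λ j ∩ φ₁, y k) ^ 2 - 4 * ∑ k ∈ φ₁, y k ≤ 0) ∧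
    ConcaveOn ℝ Set.univ UP :=
  stmt_9_general K L φ₁ φ₂ Λ a b c y z Cc αL eb hy hαL UP hUP
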